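/- arXiv:2402.18360 — 5 statements merged into one kernel-verified Lean document; each statement's English description precedes it below -/
import Mathlib

section
/- Similarity-based analogical proportions satisfy p-determinism: for every L-algebra A and elements a, d ∈ A, a : a ≈_A a : d holds if and only if d = a. -/
/-- Terms over a language `L` of function symbols with arities `ar`,
with variables indexed by `ℕ`. -/
inductive Term (L : Type) (ar : L → ℕ) : Type
  | var : ℕ → Term L ar
  | app : (f : L) → (Fin (ar f) → Term L ar) → Term L ar

/-- An `L`-algebra. -/
structure Alg (L : Type) (ar : L → ℕ) where
  carrier : Type
  op : (f : L) → (Fin (ar f) → carrier) → carrier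

/-- Evaluation of a term in an algebra under an assignment of the variables. -/
def Term.eval {L : Type} {ar : L → ℕ} (A : Alg L ar) (ρ : ℕ → A.carrier) :
    Term L ar → A.carrier
  | .var n => ρ n
  | .app f ts => A.op f fun i => (ts i).eval A ρ

/-- Homomorphisms of `L`-algebras. -/
def IsHom {L : Type} {ar : L → ℕ} (A B : Alg L ar) (H : A.carrier → B.carrier) : Prop :=
  ∀ (f : L) (as : Fin (ar f) → A.carrier), H (A.op f as) = B.op f (H ∘ as)

/-- Justifications of an arrow `a → b`: pairs of terms `(s, t)` realized under
a common assignment. -/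
def Jus {L : Type} {ar : L → ℕ} (A : Alg L ar) (p : A.carrier × A.carrier) :
    Set (Term L ar × Term L ar) :=
  {st | ∃ ρ : ℕ → A.carrier, st.1.eval A ρ = p.1 ∧ st.2.eval A ρ = p.2}

/-- Trivial justifications in `(A, B)`: those justifying every arrow in `A` and in `B`. -/
def TrivJus {L : Type} {ar : L → ℕ} (A B : Alg L ar) : Set (Term L ar × Term L ar) :=
  {st | (∀ p : A.carrier × A.carrier, st ∈ Jus A p) ∧
        (∀ q : B.carrier × B.carrier, st ∈ Jus B q)}

/-- The arrow relation `(a→b) ≲_{(A,B)} (c→d)`: either all justifications on either side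
are trivial, or the common justifications include a non-trivial one and form a maximal
set among common justification sets with arrows of `B`. -/
def ArrLe {L : Type} {ar : L → ℕ} (A B : Alg L ar)
    (p : A.carrier × A.carrier) (q : B.carrier × B.carrier) : Prop :=
  (Jus A p ∪ Jus B q ⊆ TrivJus A B) ∨
  (TrivJus A B ⊂ Jus A p ∩ Jus B q ∧
    ∀ q' : B.carrier × B.carrier,
      TrivJus A B ⊂ Jus A p ∩ Jus B q → Jus A p ∩ Jus B q ⊆ Jus A p ∩ Jus B q' →
        TrivJus A B ⊂ Jus A p ∩ Jus B q' ∧ Jus A p ∩ Jus B q' ⊆ Jus A p ∩ Jus B q)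

/-- Similarity-based analogical proportion `a : b ≈_{(A,B)} c : d`. -/
def AP {L : Type} {ar : L → ℕ} (A B : Alg L ar) (a b : A.carrier) (c d : B.carrier) : Prop :=
  ArrLe A B (a, b) (c, d) ∧ ArrLe A B (b, a) (d, c) ∧
  ArrLe B A (c, d) (a, b) ∧ ArrLe B A (d, c) (b, a)

/-- Generalizations of an element. -/
def Gen {L : Type} {ar : L → ℕ} (A : Alg L ar) (a : A.carrier) : Set (Term L ar) :=
  {s | ∃ ρ : ℕ → A.carrier, s.eval A ρ = a}

/-- Trivial generalizations in `(A, B)`. -/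
def TrivGen {L : Type} {ar : L → ℕ} (A B : Alg L ar) : Set (Term L ar) :=
  {s | (∀ a : A.carrier, s ∈ Gen A a) ∧ (∀ b : B.carrier, s ∈ Gen B b)}

/-- `a ≲_{(A,B)} b` for elements. -/
def SimLe {L : Type} {ar : L → ℕ} (A B : Alg L ar) (a : A.carrier) (b : B.carrier) : Prop :=
  (Gen A a ∪ Gen B b ⊆ TrivGen A B) ∨
  (TrivGen A B ⊂ Gen A a ∩ Gen B b ∧
    ∀ b' : B.carrier,
      TrivGen A B ⊂ Gen A a ∩ Gen B b → Gen A a ∩ Gen B b ⊆ Gen A a ∩ Gen B b' →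
        TrivGen A B ⊂ Gen A a ∩ Gen B b' ∧ Gen A a ∩ Gen B b' ⊆ Gen A a ∩ Gen B b)

/-- The similarity relation `a ≈_{(A,B)} b`. -/
def Sim {L : Type} {ar : L → ℕ} (A B : Alg L ar) (a : A.carrier) (b : B.carrier) : Prop :=
  SimLe A B a b ∧ SimLe B A b a

section

variable {L : Type} {ar : L → ℕ}

theorem trivJus_subset_jus_left (A B : Alg L ar)
    (p : A.carrier × A.carrier) : TrivJus A B ⊆ Jus A p :=
  fun _ h => h.1 p

theorem var_mem_jus_self (A : Alg L ar) (n : ℕ) (a : A.carrier) :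
    (Term.var n, Term.var n) ∈ Jus A (a, a) :=
  ⟨fun _ => a, rfl, rfl⟩

theorem eq_of_var_mem_jus (A : Alg L ar) {n : ℕ} {a b : A.carrier}
    (h : (Term.var n, Term.var n) ∈ Jus A (a, b)) : a = b := by
  obtain ⟨_, ha, hb⟩ := h
  exact ha.symm.trans hb

theorem ArrLe.refl (A : Alg L ar) (p : A.carrier × A.carrier) :
    ArrLe A A p p := by
  simp only [ArrLe, Set.union_self, Set.inter_self]
  by_cases htriv : Jus A p ⊆ TrivJus A A
  · exact Or.inl htriv
  · have hss : TrivJus A A ⊂ Jus A p := (trivJus_subset_jus_left A A p).ssubset_of_not_subset htriv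
    refine Or.inr ⟨hss, fun q' _ hq' => ⟨?_, Set.inter_subset_left⟩⟩
    rwa [Set.Subset.antisymm Set.inter_subset_left hq']

/-- The identity justification `(x, x)` of `a → a` must be common to `a → a` and `a → d`:
in the trivial case because it is trivial, otherwise by maximality against `a → a` itself. -/
theorem ArrLe.eq_of_self_left {A : Alg L ar} {a d : A.carrier}
    (h : ArrLe A A (a, a) (a, d)) : d = a := by
  have hid := var_mem_jus_self A 0 a
  suffices (Term.var 0, Term.var 0) ∈ Jus A (a, d) from (eq_of_var_mem_jus A this).symm
  rcases h with htriv | ⟨hss, hmax⟩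
  · exact (htriv (Or.inl hid)).2 (a, d)
  · obtain ⟨-, hsub⟩ := hmax (a, a) hss (by simp only [Set.inter_self, Set.inter_subset_left])
    exact (hsub (by simpa only [Set.inter_self] using hid)).2

end

/-- p-determinism: `a : a ≈_A a : d  ↔  d = a`. -/
theorem ap_p_determinism {L : Type} {ar : L → ℕ} (A : Alg L ar) (a d : A.carrier) :
    AP A A a a a d ↔ d = a := by
  constructor
  · rintro ⟨h, -, -, -⟩
    exact h.eq_of_self_left
  · rintro rfl
    exact ⟨ArrLe.refl A _, ArrLe.refl A _, ArrLe.refl A _, ArrLe.refl A _⟩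
end

section
/- Similarity-based analogical proportions do not in general satisfy inner p-reflexivity: in the algebra with universe {a, b, c} and one unary function f with f(a)=a, f(b)=c, f(c)=c, the proportion a : a ≈ b : b fails. -/
/-- The algebra `({a,b,c}, f)` with `f(a)=a, f(b)=c, f(c)=c`, where `a=0, b=1, c=2`. -/
abbrev A9 : Alg Unit (fun _ => 1) := ⟨Fin 3, fun _ v => ![0, 2, 2] (v 0)⟩

/-!
Every justification of `b → b` is a pair of variables, because `b` is not a value of `f`; pairs of
variables also justify `c → c`. So the common justifications of `a → a` and `b → b` are contained in
those of `a → a` and `c → c`, and strictly so: `(f x, f x)` justifies `a → a` and `c → c` but not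
`b → b`. Hence they are not maximal, and `(a → a) ≲ (b → b)` fails.
-/

section

variable {L : Type} {ar : L → ℕ}

theorem Term.exists_eq_var_of_eval_eq {A : Alg L ar} {a : A.carrier}
    (ha : ∀ f as, A.op f as ≠ a) {ρ : ℕ → A.carrier} {t : Term L ar} (ht : t.eval A ρ = a) :
    ∃ i, t = .var i := by
  cases t with
  | var i => exact ⟨i, rfl⟩
  | app f ts => exact absurd ht (ha f _)

theorem var_mem_jus_diag (A : Alg L ar) (i j : ℕ) (c : A.carrier) :
    (Term.var i, Term.var j) ∈ Jus A (c, c) :=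
  ⟨fun _ => c, rfl, rfl⟩

theorem var_var_not_mem_jus {A : Alg L ar} {a b : A.carrier} (hab : a ≠ b) (i : ℕ) :
    (Term.var i, Term.var i) ∉ Jus A (a, b) := by
  rintro ⟨ρ, ha, hb⟩
  exact hab (ha.symm.trans hb)

theorem var_var_not_mem_trivJus {A : Alg L ar} (B : Alg L ar) {a b : A.carrier} (hab : a ≠ b)
    (i : ℕ) : (Term.var i, Term.var i) ∉ TrivJus A B :=
  fun h => var_var_not_mem_jus hab i (h.1 (a, b))

theorem jus_subset_jus_diag {A : Alg L ar} {b d : A.carrier} (hb : ∀ f as, A.op f as ≠ b)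
    (hd : ∀ f as, A.op f as ≠ d) (c : A.carrier) : Jus A (b, d) ⊆ Jus A (c, c) := by
  rintro ⟨s, t⟩ ⟨ρ, hs, ht⟩
  obtain ⟨i, rfl⟩ := Term.exists_eq_var_of_eval_eq hb hs
  obtain ⟨j, rfl⟩ := Term.exists_eq_var_of_eval_eq hd ht
  exact var_mem_jus_diag A i j c

theorem not_arrLe_of_ssubset {A B : Alg L ar} {p : A.carrier × A.carrier}
    {q q' : B.carrier × B.carrier} (hnontriv : ¬ Jus A p ∪ Jus B q ⊆ TrivJus A B)
    (hlt : Jus A p ∩ Jus B q ⊂ Jus A p ∩ Jus B q') : ¬ ArrLe A B p q := by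
  rintro (htriv | ⟨hne, hmax⟩)
  · exact hnontriv htriv
  · exact hlt.2 (hmax q' hne hlt.1).2

end

theorem A9_op_ne_one : ∀ f as, A9.op f as ≠ 1 := by
  decide

/-- inner p-reflexivity fails: `a : a ≈ b : b` fails in this algebra. -/
theorem ap_inner_p_reflexivity_fails : ¬ AP A9 A9 (0 : Fin 3) 0 1 1 := by
  intro hap
  let fx : Term Unit (fun _ => 1) := .app () fun _ => .var 0
  have hnontriv : ¬ Jus A9 (0, 0) ∪ Jus A9 (1, 1) ⊆ TrivJus A9 A9 := fun h =>
    var_var_not_mem_trivJus A9 (a := (0 : Fin 3)) (b := 1) (by decide) 0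
      (h (Or.inl (var_mem_jus_diag A9 0 0 0)))
  have hfx_mem : (fx, fx) ∈ Jus A9 (0, 0) ∩ Jus A9 (2, 2) :=
    ⟨⟨fun _ => 0, rfl, rfl⟩, ⟨fun _ => 1, rfl, rfl⟩⟩
  have hfx_not_mem : (fx, fx) ∉ Jus A9 (1, 1) := fun ⟨_, hs, _⟩ => A9_op_ne_one _ _ hs
  have hsub : Jus A9 (1, 1) ⊆ Jus A9 (2, 2) := jus_subset_jus_diag A9_op_ne_one A9_op_ne_one _
  have hlt : Jus A9 (0, 0) ∩ Jus A9 (1, 1) ⊂ Jus A9 (0, 0) ∩ Jus A9 (2, 2) :=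
    ⟨Set.inter_subset_inter_right _ hsub, fun h => hfx_not_mem (h hfx_mem).2⟩
  exact not_arrLe_of_ssubset hnontriv hlt hap.1
end

section
/- Similarity-based analogical proportions do not in general satisfy strong p-reflexivity: in the algebra on three distinct elements {a, b, d} with no operations, a : b ≈ a : d holds with d ≠ b. -/
/-- The algebra on `{a,b,d}` over the empty language, where `a=0, b=1, d=2`. -/
abbrev A12 : Alg Empty (fun e => e.elim) := ⟨Fin 3, fun f => f.elim⟩

theorem var_var_mem_jus {L : Type} {ar : L → ℕ} (A : Alg L ar) {m n : ℕ} (hmn : m ≠ n)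
    (p : A.carrier × A.carrier) : (Term.var m, Term.var n) ∈ Jus A p :=
  ⟨Function.update (fun _ => p.2) m p.1, by simp [Term.eval, hmn.symm]⟩

theorem var_var_mem_trivJus {L : Type} {ar : L → ℕ} (A B : Alg L ar) {m n : ℕ}
    (hmn : m ≠ n) : (Term.var m, Term.var n) ∈ TrivJus A B :=
  ⟨var_var_mem_jus A hmn, var_var_mem_jus B hmn⟩

section EmptyLanguage

variable {L : Type} {ar : L → ℕ} [IsEmpty L]

theorem Term.exists_eq_var : (s : Term L ar) → ∃ n, s = .var n
  | .var n => ⟨n, rfl⟩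
  | .app f _ => (IsEmpty.false f).elim

/-- Without function symbols, a justification of an arrow between distinct elements is a pair
of distinct variables. -/
theorem jus_subset_trivJus {A : Alg L ar} (B C : Alg L ar) {p : A.carrier × A.carrier}
    (hp : p.1 ≠ p.2) : Jus A p ⊆ TrivJus B C := by
  rintro ⟨s, t⟩ ⟨ρ, hs, ht⟩
  obtain ⟨m, rfl⟩ := s.exists_eq_var
  obtain ⟨n, rfl⟩ := t.exists_eq_var
  have hmn : m ≠ n := by
    rintro rfl
    exact hp (hs.symm.trans ht)
  exact var_var_mem_trivJus B C hmn

theorem arrLe_of_ne {A B : Alg L ar} {p : A.carrier × A.carrier} {q : B.carrier × B.carrier}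
    (hp : p.1 ≠ p.2) (hq : q.1 ≠ q.2) : ArrLe A B p q :=
  Or.inl (Set.union_subset (jus_subset_trivJus A B hp) (jus_subset_trivJus A B hq))

theorem ap_of_ne {A B : Alg L ar} {a b : A.carrier} {c d : B.carrier} (hab : a ≠ b)
    (hcd : c ≠ d) : AP A B a b c d :=
  ⟨arrLe_of_ne hab hcd, arrLe_of_ne hab.symm hcd.symm, arrLe_of_ne hcd hab,
    arrLe_of_ne hcd.symm hab.symm⟩

end EmptyLanguage

/-- strong p-reflexivity fails: `a : b ≈ a : d` holds with `d ≠ b`. -/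
theorem ap_strong_p_reflexivity_fails :
    AP A12 A12 (0 : Fin 3) 1 0 2 ∧ (2 : Fin 3) ≠ 1 :=
  ⟨ap_of_ne (by decide) (by decide), by decide⟩
end

section
/- First Isomorphism Theorem (similarity-based): if H : A → B is a homomorphism of L-algebras such that for all a, b ∈ A, the arrow a → b having only trivial justifications in A implies Ha → Hb has only trivial justifications in B, then a → b ≲_{(A,B)} Ha → Hb for all a, b ∈ A. -/
section

variable {L : Type} {ar : L → ℕ} {A B : Alg L ar}

theorem IsHom.map_eval {H : A.carrier → B.carrier} (hH : IsHom A B H) (ρ : ℕ → A.carrier) :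
    ∀ t : Term L ar, H (t.eval A ρ) = t.eval B (H ∘ ρ)
  | .var _ => rfl
  | .app f ts => by
    simp only [Term.eval, hH f]
    congr 1
    funext i
    exact hH.map_eval ρ (ts i)

theorem IsHom.jus_subset_jus_map {H : A.carrier → B.carrier} (hH : IsHom A B H)
    (a b : A.carrier) : Jus A (a, b) ⊆ Jus B (H a, H b) := by
  rintro st ⟨ρ, ha, hb⟩
  exact ⟨H ∘ ρ, by rw [← hH.map_eval, ha], by rw [← hH.map_eval, hb]⟩

/-- The common justifications are then all of `Jus A p`, so no arrow of `B` can share strictly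
more of them. -/
theorem arrLe_of_jus_subset {p : A.carrier × A.carrier} {q : B.carrier × B.carrier}
    (hsub : Jus A p ⊆ Jus B q)
    (htriv : Jus A p ⊆ TrivJus A B → Jus B q ⊆ TrivJus A B) : ArrLe A B p q := by
  by_cases hA : Jus A p ⊆ TrivJus A B
  · exact Or.inl (Set.union_subset hA (htriv hA))
  · right
    have hcommon : Jus A p ∩ Jus B q = Jus A p := Set.inter_eq_left.mpr hsub
    have hstrict : TrivJus A B ⊂ Jus A p := ⟨fun _ h => h.1 p, hA⟩
    rw [hcommon]
    exact ⟨hstrict, fun _ _ hle => ⟨hstrict.trans_le hle, Set.inter_subset_left⟩⟩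

end

/-- First Isomorphism Theorem (similarity-based), homomorphism case. -/
theorem first_isomorphism_theorem {L : Type} {ar : L → ℕ} (A B : Alg L ar)
    (H : A.carrier → B.carrier) (hH : IsHom A B H)
    (htriv : ∀ a b : A.carrier,
      Jus A (a, b) ⊆ TrivJus A B → Jus B (H a, H b) ⊆ TrivJus A B) :
    ∀ a b : A.carrier, ArrLe A B (a, b) (H a, H b) := fun a b =>
  arrLe_of_jus_subset (hH.jus_subset_jus_map a b) (htriv a b)
end

section
/- Second Isomorphism Theorem (similarity-based): for any isomorphism H : A → B of L-algebras and elements a, b, c, d ∈ A, a : b ≈_A c : d holds if and only if Ha : Hb ≈_B Hc : Hd holds. -/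
section Transport

variable {L : Type} {ar : L → ℕ} {A B : Alg L ar} {H : A.carrier → B.carrier}

theorem Term.eval_comp_of_isHom (hH : IsHom A B H) (ρ : ℕ → A.carrier) :
    ∀ t : Term L ar, t.eval B (H ∘ ρ) = H (t.eval A ρ)
  | .var _ => rfl
  | .app f ts => by
    simp only [Term.eval, hH f]
    congr 1
    funext i
    exact Term.eval_comp_of_isHom hH ρ (ts i)

theorem jus_map_of_bijective (hH : IsHom A B H) (hbij : Function.Bijective H)
    (a b : A.carrier) : Jus B (H a, H b) = Jus A (a, b) := by
  ext ⟨s, t⟩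
  constructor
  · rintro ⟨ρ, hs, ht⟩
    obtain ⟨σ, rfl⟩ := hbij.2.comp_left ρ
    rw [Term.eval_comp_of_isHom hH] at hs ht
    exact ⟨σ, hbij.1 hs, hbij.1 ht⟩
  · rintro ⟨σ, hs, ht⟩
    exact ⟨H ∘ σ, by simp only [Term.eval_comp_of_isHom hH, hs], by
      simp only [Term.eval_comp_of_isHom hH, ht]⟩

theorem trivJus_self_eq_of_bijective (hH : IsHom A B H) (hbij : Function.Bijective H) :
    TrivJus B B = TrivJus A A := by
  ext st
  simp only [TrivJus, Set.mem_ofPred_eq, and_self, Prod.forall, hbij.2.forall,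
    jus_map_of_bijective hH hbij]

/-- Surjectivity of `H` reindexes the maximality quantifier over arrows of `B` by arrows of `A`. -/
theorem arrLe_self_map_iff_of_bijective (hH : IsHom A B H) (hbij : Function.Bijective H)
    (a b c d : A.carrier) :
    ArrLe B B (H a, H b) (H c, H d) ↔ ArrLe A A (a, b) (c, d) := by
  simp only [ArrLe, Prod.forall, hbij.2.forall, jus_map_of_bijective hH hbij,
    trivJus_self_eq_of_bijective hH hbij]

end Transport

theorem second_isomorphism_theorem_general {L : Type} {ar : L → ℕ} (A B : Alg L ar)
    (H : A.carrier → B.carrier) (G : B.carrier → A.carrier)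
    (hH : IsHom A B H)
    (hGH : ∀ x, G (H x) = x) (hHG : ∀ y, H (G y) = y)
    (a b c d : A.carrier) :
    AP A A a b c d ↔ AP B B (H a) (H b) (H c) (H d) := by
  have hbij : Function.Bijective H := Function.bijective_iff_has_inverse.mpr ⟨G, hGH, hHG⟩
  simp only [AP, arrLe_self_map_iff_of_bijective hH hbij]

/-- Second Isomorphism Theorem (similarity-based):
`a : b ≈_A c : d  ↔  Ha : Hb ≈_B Hc : Hd`. -/
theorem second_isomorphism_theorem {L : Type} {ar : L → ℕ} (A B : Alg L ar)
    (H : A.carrier → B.carrier) (G : B.carrier → A.carrier)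
    (hH : IsHom A B H) (hG : IsHom B A G)
    (hGH : ∀ x, G (H x) = x) (hHG : ∀ y, H (G y) = y)
    (a b c d : A.carrier) :
    AP A A a b c d ↔ AP B B (H a) (H b) (H c) (H d) :=
  second_isomorphism_theorem_general A B H G hH hGH hHG a b c d
end
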